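/- arXiv:math/0502416 — 3 statements merged into one kernel-verified Lean document; each statement's English description precedes it below -/
import Mathlib

section
/- The multicolor Ramsey number R(K_3, K_3, C_4, C_4) is at least 27; that is, there exists a 4-coloring of the edges of the complete graph K_26 such that color classes 1 and 2 contain no triangle and color classes 3 and 4 contain no 4-cycle. -/
open SimpleGraph

/-- `H` is contained in `G` as a subgraph (injective graph homomorphism). -/
def Contains {W V : Type*} (H : SimpleGraph W) (G : SimpleGraph V) : Prop :=
  ∃ f : H →g G, Function.Injective f

/-- The `i`-th color class of an edge coloring `c` of the complete graph on `V`. -/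
def colorClass {V : Type*} {k : ℕ} (c : Sym2 V → Fin k) (i : Fin k) : SimpleGraph V :=
  SimpleGraph.fromRel (fun a b => c s(a, b) = i)

/-- Base-4 encoding of a 26×26 color matrix. -/
def BIG : ℕ := 2984236626696996505803723953547466820194107728695812355244250938559476341350958466636503909883075562283426637530555482561305592027412812814681455130533042026445896232888754105693544803340678585422058947412449036811485955140766322511614328019006550445812649726656963770393870449898343318932513824803682463789551497664773639071791928595650455199221056283844349974339439260208401126429946141838958797660412236

/-- Neighbor bitmask tables for each color. -/
def NB2 : ℕ := 652127979664277699627270043910884046504350880094782545156229623107241752954896458168379339356260037785263690646148750782287503948825901094056800100681589746772516153542246320155786566234119485608431648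
def NB3 : ℕ := 29417220487477149504273110872138488161009618973892522988527332132135245014565331758662721601782214759246877462575653970453701263373618081670893545329392523632199204162028532916245970617243210777337643138

def gf (a b : Fin 26) : Fin 4 :=
  ⟨(BIG >>> (2 * (a.val * 26 + b.val))) % 4, Nat.mod_lt _ (by norm_num)⟩

lemma gf_symm : ∀ a b : Fin 26, gf a b = gf b a := by decide

def nb2 (a : Fin 26) : ℕ := (NB2 >>> (26 * a.val)) &&& 0x3FFFFFF
def nb3 (a : Fin 26) : ℕ := (NB3 >>> (26 * a.val)) &&& 0x3FFFFFF

def myc : Sym2 (Fin 26) → Fin 4 := Sym2.lift ⟨gf, gf_symm⟩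

lemma noTri0 : ∀ a b x : Fin 26, ¬(a ≠ b ∧ a ≠ x ∧ b ≠ x ∧
    gf a b = 0 ∧ gf a x = 0 ∧ gf b x = 0) := by decide

lemma noTri1 : ∀ a b x : Fin 26, ¬(a ≠ b ∧ a ≠ x ∧ b ≠ x ∧
    gf a b = 1 ∧ gf a x = 1 ∧ gf b x = 1) := by decide

lemma bridge2 : ∀ a b : Fin 26,
    Nat.testBit (nb2 a) b.val = true ↔ (a ≠ b ∧ gf a b = 2) := by decide

lemma bridge3 : ∀ a b : Fin 26,
    Nat.testBit (nb3 a) b.val = true ↔ (a ≠ b ∧ gf a b = 3) := by decide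

lemma common2 : ∀ a c b : Fin 26, a ≠ c → Nat.testBit (nb2 a) b.val = true →
    Nat.testBit (nb2 c) b.val = true → (nb2 a) &&& (nb2 c) = 2 ^ b.val := by decide

lemma common3 : ∀ a c b : Fin 26, a ≠ c → Nat.testBit (nb3 a) b.val = true →
    Nat.testBit (nb3 c) b.val = true → (nb3 a) &&& (nb3 c) = 2 ^ b.val := by decide

lemma adj_iff (i : Fin 4) (a b : Fin 26) :
    (colorClass myc i).Adj a b ↔ a ≠ b ∧ gf a b = i := by
  show (SimpleGraph.fromRel _).Adj a b ↔ _
  rw [SimpleGraph.fromRel_adj]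
  constructor
  · rintro ⟨hne, h | h⟩
    · exact ⟨hne, h⟩
    · refine ⟨hne, ?_⟩
      have : myc s(b, a) = gf b a := rfl
      rw [this, ← gf_symm] at h
      exact h
  · rintro ⟨hne, h⟩
    exact ⟨hne, Or.inl h⟩

lemma cliqueFree_of_noTri (i : Fin 4)
    (h : ∀ a b x : Fin 26, ¬(a ≠ b ∧ a ≠ x ∧ b ≠ x ∧
      gf a b = i ∧ gf a x = i ∧ gf b x = i)) :
    (colorClass myc i).CliqueFree 3 := by
  intro t ht
  rw [SimpleGraph.is3Clique_iff] at ht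
  obtain ⟨a, b, x, hab, hax, hbx, -⟩ := ht
  rw [adj_iff] at hab hax hbx
  exact h a b x ⟨hab.1, hax.1, hbx.1, hab.2, hax.2, hbx.2⟩

lemma noC4 (i : Fin 4) (nb : Fin 26 → ℕ)
    (hbr : ∀ a b : Fin 26, Nat.testBit (nb a) b.val = true ↔ (a ≠ b ∧ gf a b = i))
    (hcm : ∀ a c b : Fin 26, a ≠ c → Nat.testBit (nb a) b.val = true →
      Nat.testBit (nb c) b.val = true → (nb a) &&& (nb c) = 2 ^ b.val) :
    ¬ Contains (cycleGraph 4) (colorClass myc i) := by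
  rintro ⟨f, hinj⟩
  have e01 : (colorClass myc i).Adj (f 0) (f 1) := f.map_adj (by decide)
  have e12 : (colorClass myc i).Adj (f 1) (f 2) := f.map_adj (by decide)
  have e23 : (colorClass myc i).Adj (f 2) (f 3) := f.map_adj (by decide)
  have e30 : (colorClass myc i).Adj (f 3) (f 0) := f.map_adj (by decide)
  rw [adj_iff] at e01 e12 e23 e30
  have h02 : f 0 ≠ f 2 := fun h => by simpa using hinj h
  have h13 : f 1 ≠ f 3 := fun h => by simpa using hinj h
  -- f 1 is a common neighbor of f 0 and f 2
  have t01 : Nat.testBit (nb (f 0)) (f 1).val = true := (hbr _ _).2 ⟨e01.1, e01.2⟩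
  have t21 : Nat.testBit (nb (f 2)) (f 1).val = true :=
    (hbr _ _).2 ⟨(Ne.symm e12.1), by rw [gf_symm]; exact e12.2⟩
  have t23 : Nat.testBit (nb (f 2)) (f 3).val = true := (hbr _ _).2 ⟨e23.1, e23.2⟩
  have t03 : Nat.testBit (nb (f 0)) (f 3).val = true :=
    (hbr _ _).2 ⟨(Ne.symm e30.1), by rw [gf_symm]; exact e30.2⟩
  have hb := hcm (f 0) (f 2) (f 1) h02 t01 t21
  have hd := hcm (f 0) (f 2) (f 3) h02 t03 t23
  have : (f 1).val = (f 3).val :=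
    Nat.pow_right_injective (le_refl 2) (hb.symm.trans hd)
  exact h13 (Fin.val_injective this)

theorem stmt0 :
    ∃ c : Sym2 (Fin 26) → Fin 4,
      (colorClass c 0).CliqueFree 3 ∧
      (colorClass c 1).CliqueFree 3 ∧
      ¬ Contains (cycleGraph 4) (colorClass c 2) ∧
      ¬ Contains (cycleGraph 4) (colorClass c 3) := by
  exact ⟨myc, cliqueFree_of_noTri 0 noTri0, cliqueFree_of_noTri 1 noTri1,
    noC4 2 nb2 bridge2 common2, noC4 3 nb3 bridge3 common3⟩
end

section
/- If G is a C_4-free graph on n vertices, then the number of edges of G is at most (n/4)(1 + sqrt(4n-3)). -/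
open SimpleGraph

open Finset
lemma c4_of {V : Type*} (G : SimpleGraph V) {u a w b : V}
    (huw : u ≠ w) (hab : a ≠ b)
    (h1 : G.Adj u a) (h2 : G.Adj a w) (h3 : G.Adj w b) (h4 : G.Adj b u) :
    ∃ f : cycleGraph 4 →g G, Function.Injective f := by
  have hinj : Function.Injective ![u, a, w, b] := by
    intro i j hij
    have n1 := h1.ne; have n2 := h2.ne; have n3 := h3.ne; have n4 := h4.ne
    fin_cases i <;> fin_cases j <;> simp_all
  refine ⟨⟨![u, a, w, b], ?_⟩, hinj⟩
  intro i j hij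
  rw [cycleGraph_adj'] at hij
  fin_cases i <;> fin_cases j <;>
    first
    | exact absurd hij (by decide)
    | exact h1 | exact h1.symm | exact h2 | exact h2.symm
    | exact h3 | exact h3.symm | exact h4 | exact h4.symm

section main
variable {V : Type*} [Fintype V] (G : SimpleGraph V) [DecidableRel G.Adj]

lemma codeg_le [DecidableEq V] (hG : ¬ ∃ f : cycleGraph 4 →g G, Function.Injective f)
    {u w : V} (huw : u ≠ w) :
    (G.neighborFinset u ∩ G.neighborFinset w).card ≤ 1 := by
  by_contra h
  obtain ⟨a, ha, b, hb, hab⟩ := Finset.one_lt_card.mp (lt_of_not_ge h)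
  simp only [Finset.mem_inter, mem_neighborFinset] at ha hb
  exact hG (c4_of G huw hab ha.1 ha.2.symm hb.2 hb.1.symm)

lemma sum_offdiag_le [DecidableEq V]
    (hG : ¬ ∃ f : cycleGraph 4 →g G, Function.Injective f) :
    ∑ v, ((G.neighborFinset v).offDiag).card ≤ ((univ : Finset V).offDiag).card := by
  have h1 : ∀ v : V, (G.neighborFinset v).offDiag =
      (univ : Finset V).offDiag.filter
        (fun p => p.1 ∈ G.neighborFinset v ∧ p.2 ∈ G.neighborFinset v) := by
    intro v; ext p
    simp only [Finset.mem_offDiag, Finset.mem_filter, Finset.mem_univ, true_and]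
    tauto
  calc ∑ v, ((G.neighborFinset v).offDiag).card
      = ∑ v, ∑ p ∈ (univ : Finset V).offDiag,
          (if p.1 ∈ G.neighborFinset v ∧ p.2 ∈ G.neighborFinset v then 1 else 0) := by
        simp_rw [h1, Finset.card_filter]
    _ = ∑ p ∈ (univ : Finset V).offDiag, ∑ v : V,
          (if p.1 ∈ G.neighborFinset v ∧ p.2 ∈ G.neighborFinset v then 1 else 0) :=
        Finset.sum_comm
    _ ≤ ∑ _p ∈ (univ : Finset V).offDiag, 1 := by
        refine Finset.sum_le_sum fun p hp => ?_
        have hne : p.1 ≠ p.2 := (Finset.mem_offDiag.mp hp).2.2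
        have : ∑ v : V, (if p.1 ∈ G.neighborFinset v ∧ p.2 ∈ G.neighborFinset v
            then 1 else 0) = (G.neighborFinset p.1 ∩ G.neighborFinset p.2).card := by
          rw [← Finset.card_filter]
          congr 1
          ext v
          simp only [Finset.mem_filter, Finset.mem_univ, true_and, Finset.mem_inter,
            mem_neighborFinset]
          rw [G.adj_comm p.1 v, G.adj_comm p.2 v]
        rw [this]
        exact codeg_le G hG hne
    _ = ((univ : Finset V).offDiag).card := by rw [Finset.card_eq_sum_ones]

end main

theorem stmt13' {V : Type*} [Fintype V] (G : SimpleGraph V) [DecidableRel G.Adj]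
    (hG : ¬ ∃ f : cycleGraph 4 →g G, Function.Injective f) :
    (G.edgeFinset.card : ℝ) ≤
      (Fintype.card V : ℝ) / 4 * (1 + Real.sqrt (4 * Fintype.card V - 3)) := by
  classical
  set n := Fintype.card V with hn
  rcases Nat.eq_zero_or_pos n with h0 | hpos
  · have : IsEmpty V := Fintype.card_eq_zero_iff.mp h0
    have he : G.edgeFinset = ∅ := by
      ext e
      induction e using Sym2.ind with
      | _ a b => exact isEmptyElim a
    rw [he, h0]
    simp
  -- natural-number counting
  have hkey : ∑ v, G.degree v * G.degree v ≤ n * n - n + ∑ v, G.degree v := by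
    have h := sum_offdiag_le G hG
    have h2 : ∀ v : V, ((G.neighborFinset v).offDiag).card
        = G.degree v * G.degree v - G.degree v := by
      intro v; rw [Finset.offDiag_card, card_neighborFinset_eq_degree]
    have h3 : ((univ : Finset V).offDiag).card = n * n - n := by
      rw [Finset.offDiag_card, Finset.card_univ]
    rw [h3] at h
    simp_rw [h2] at h
    have h4 : ∑ v, (G.degree v * G.degree v - G.degree v) + ∑ v, G.degree v
        = ∑ v, G.degree v * G.degree v := by
      rw [← Finset.sum_add_distrib]
      refine Finset.sum_congr rfl fun v _ => ?_
      have : G.degree v ≤ G.degree v * G.degree v := by nlinarith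
      omega
    omega
  have hdeg : ∑ v, G.degree v = 2 * G.edgeFinset.card :=
    G.sum_degrees_eq_twice_card_edges
  -- move to reals
  set e : ℝ := (G.edgeFinset.card : ℝ) with heq
  have he0 : (0:ℝ) ≤ e := Nat.cast_nonneg _
  have hnn : n ≤ n * n := by nlinarith
  have hkeyR : ∑ v, (G.degree v : ℝ)^2 ≤ (n:ℝ) * n - n + 2 * e := by
    have h1 : ∑ v, G.degree v * G.degree v ≤ n * n - n + 2 * G.edgeFinset.card :=
      hdeg ▸ hkey
    have h2 := (Nat.cast_le (α := ℝ)).mpr h1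
    rw [Nat.cast_add, Nat.cast_sub hnn] at h2
    push_cast at h2
    have h3 : ∑ v, (G.degree v : ℝ)^2 = ∑ v, (G.degree v : ℝ) * G.degree v := by
      simp [sq]
    rw [h3, heq]
    linarith [h2]
  have hCS : (2 * e)^2 ≤ n * ∑ v, (G.degree v : ℝ)^2 := by
    have := sq_sum_le_card_mul_sum_sq (s := (univ : Finset V))
      (f := fun v => (G.degree v : ℝ))
    rw [Finset.card_univ] at this
    have h4 : 2 * e = ∑ v, (G.degree v : ℝ) := by
      rw [heq]; exact_mod_cast hdeg.symm
    rw [h4, hn]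
    exact this
  have hq : 4 * e^2 ≤ (n:ℝ) * (n * n - n + 2 * e) := by
    nlinarith [hCS, hkeyR, Nat.cast_nonneg (α := ℝ) n]
  set s : ℝ := Real.sqrt (4 * n - 3) with hs
  have h43 : (0:ℝ) ≤ 4 * n - 3 := by
    have : (1:ℝ) ≤ n := by exact_mod_cast hpos
    linarith
  have hs2 : s^2 = 4 * n - 3 := Real.sq_sqrt h43
  have hs0 : (0:ℝ) ≤ s := Real.sqrt_nonneg _
  have hs1 : (1:ℝ) ≤ s := by nlinarith [(show (1:ℝ) ≤ n by exact_mod_cast hpos)]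
  have hn1 : (1:ℝ) ≤ n := by exact_mod_cast hpos
  by_contra hcon
  push_neg at hcon
  have hfac2 : (0:ℝ) < 4*(e + n/4*(1+s)) - 2*n := by nlinarith
  nlinarith [mul_pos (sub_pos.mpr hcon) hfac2, hq, hs2, hs0, hn1, he0]

theorem stmt13 {V : Type*} [Fintype V] (G : SimpleGraph V) [DecidableRel G.Adj]
    (hG : ¬ Contains (cycleGraph 4) G) :
    (G.edgeFinset.card : ℝ) ≤
      (Fintype.card V : ℝ) / 4 * (1 + Real.sqrt (4 * Fintype.card V - 3)) := by
  exact stmt13' G hG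
end

section
/- If a graph G on n vertices satisfies that the sum over all vertices v of C(deg(v), 2) exceeds C(n, 2), then G contains a 4-cycle. -/
open SimpleGraph

open Finset in
theorem stmt14_aux {V : Type*} [Fintype V] (G : SimpleGraph V) [DecidableRel G.Adj]
    (h : (Fintype.card V).choose 2 < ∑ v : V, (G.degree v).choose 2) :
    ∃ f : cycleGraph 4 →g G, Function.Injective f := by
  classical
  have hmaps : ∀ x ∈ (univ : Finset V).sigma (fun v => (G.neighborFinset v).powersetCard 2),
      x.2 ∈ (univ : Finset V).powersetCard 2 := by
    rintro ⟨v, s⟩ hx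
    simp only [mem_sigma, mem_powersetCard] at *
    exact ⟨subset_univ _, hx.2.2⟩
  have hcard : ((univ : Finset V).powersetCard 2).card <
      ((univ : Finset V).sigma (fun v => (G.neighborFinset v).powersetCard 2)).card := by
    rw [Finset.card_sigma, Finset.card_powersetCard, Finset.card_univ]
    simpa [Finset.card_powersetCard, card_neighborFinset_eq_degree] using h
  obtain ⟨⟨v, s⟩, hv, ⟨w, t⟩, hw, hne, heq⟩ :=
    Finset.exists_ne_map_eq_of_card_lt_of_maps_to hcard hmaps
  simp only at heq
  subst heq
  have hvw : v ≠ w := by rintro rfl; exact hne rfl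
  simp only [mem_sigma, mem_powersetCard] at hv hw
  obtain ⟨a, b, hab, rfl⟩ := Finset.card_eq_two.mp hv.2.2
  have hva : G.Adj v a := by rw [← mem_neighborFinset]; exact hv.2.1 (by simp)
  have hvb : G.Adj v b := by rw [← mem_neighborFinset]; exact hv.2.1 (by simp)
  have hwa : G.Adj w a := by rw [← mem_neighborFinset]; exact hw.2.1 (by simp)
  have hwb : G.Adj w b := by rw [← mem_neighborFinset]; exact hw.2.1 (by simp)
  have h1 : a ≠ b := hab
  have h2 : b ≠ a := fun e => hab e.symm
  have h3 : v ≠ w := hvw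
  have h4 : w ≠ v := fun e => hvw e.symm
  have h5 : v ≠ a := hva.ne
  have h6 : a ≠ v := hva.ne'
  have h7 : v ≠ b := hvb.ne
  have h8 : b ≠ v := hvb.ne'
  have h9 : w ≠ a := hwa.ne
  have h10 : a ≠ w := hwa.ne'
  have h11 : w ≠ b := hwb.ne
  have h12 : b ≠ w := hwb.ne'
  refine ⟨⟨![a, v, b, w], ?_⟩, ?_⟩
  · intro i j hij
    rw [cycleGraph_adj] at hij
    fin_cases i <;> fin_cases j <;>
      simp only [Matrix.cons_val_zero, Matrix.cons_val_one, Matrix.head_cons,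
        Matrix.cons_val_two, Matrix.tail_cons, Matrix.cons_val_three,
        Matrix.cons_val_fin_one, Fin.mk_zero, Fin.mk_one] <;>
      first
        | exact absurd hij (by decide)
        | exact hva | exact hvb | exact hwa | exact hwb
        | exact hva.symm | exact hvb.symm | exact hwa.symm | exact hwb.symm
  · intro i j hij
    have hij' : ![a, v, b, w] i = ![a, v, b, w] j := hij
    fin_cases i <;> fin_cases j <;> simp_all

theorem stmt14 {V : Type*} [Fintype V] (G : SimpleGraph V) [DecidableRel G.Adj]
    (h : (Fintype.card V).choose 2 < ∑ v : V, (G.degree v).choose 2) :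
    Contains (cycleGraph 4) G := by
  exact stmt14_aux G h
end
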